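/- The pair of functions ū1(x) = 0 for |x| ≥ 1 and ū1(x) = -(1-|x|)²/2 for |x| < 1, together with ū2(x) = 0, satisfies the system u1 = -(u1'/2 + u2')·u1' and u2 = -(u2'/2 + u1')·u2' at every x in ℝ where ū1 is differentiable (i.e., at every x ≠ 0). -/

import Mathlib

/-!
Away from the origin, `ū₁ = -((1 - |x|)₊)² / 2`. The square of the positive part is `C¹` with
derivative `2 t₊`, so the chain rule through `|·|` gives `ū₁' = sign x · (1 - |x|)₊` at every
`x ≠ 0`, including the corners `|x| = 1`. Hence `-(ū₁')² / 2 = ū₁`, which is the first equation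
once `ū₂ ≡ 0`; the second one reads `0 = 0`.
-/

open Set

theorem hasDerivAt_max_zero_sq (t : ℝ) :
    HasDerivAt (fun s : ℝ => max s 0 ^ 2) (2 * max t 0) t := by
  rcases lt_trichotomy t 0 with ht | rfl | ht
  · rw [max_eq_right ht.le, mul_zero]
    refine (hasDerivAt_const t (0 : ℝ)).congr_of_eventuallyEq ?_
    filter_upwards [Iio_mem_nhds ht] with s hs
    simp [max_eq_right (le_of_lt (mem_Iio.mp hs))]
  · have hleft : HasDerivWithinAt (fun s : ℝ => max s 0 ^ 2) 0 (Iic 0) 0 :=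
      (hasDerivWithinAt_const 0 _ (0 : ℝ)).congr_of_mem
        (fun s hs => by simp [max_eq_right (mem_Iic.mp hs)]) self_mem_Iic
    have hright : HasDerivWithinAt (fun s : ℝ => max s 0 ^ 2) 0 (Ici 0) 0 := by
      simpa using ((hasDerivAt_pow 2 (0 : ℝ)).hasDerivWithinAt (s := Ici 0)).congr_of_mem
        (fun s hs => by simp [max_eq_left (mem_Ici.mp hs)]) self_mem_Ici
    simpa [Iic_union_Ici] using hleft.union hright
  · rw [max_eq_left ht.le]
    refine ((hasDerivAt_pow 2 t).congr_of_eventuallyEq ?_).congr_deriv (by ring)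
    filter_upwards [Ioi_mem_nhds ht] with s hs
    simp [max_eq_left (le_of_lt (mem_Ioi.mp hs))]

theorem ite_le_abs_eq_neg_max_sq (c x : ℝ) :
    (if c ≤ |x| then 0 else -(c - |x|) ^ 2 / 2) = -max (c - |x|) 0 ^ 2 / 2 := by
  split_ifs with h
  · simp [max_eq_right (sub_nonpos.mpr h)]
  · rw [max_eq_left (sub_nonneg.mpr (not_le.mp h).le)]

theorem hasDerivAt_neg_max_sub_abs_sq (c : ℝ) {x : ℝ} (hx : x ≠ 0) :
    HasDerivAt (fun y : ℝ => -max (c - |y|) 0 ^ 2 / 2) (SignType.sign x * max (c - |x|) 0) x := by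
  have h := (((hasDerivAt_max_zero_sq (c - |x|)).comp x ((hasDerivAt_abs hx).const_sub c)).neg
    ).div_const 2
  exact h.congr_deriv (by ring)

theorem sign_sq_of_ne_zero {α : Type*} [Ring α] [LinearOrder α] [IsStrictOrderedRing α] {x : α}
    (hx : x ≠ 0) : (SignType.sign x : α) ^ 2 = 1 := by
  rcases hx.lt_or_gt with h | h <;> simp [h]

theorem bar_pair_solves_HJ_system_ae :
    let u1 : ℝ → ℝ := fun x => if 1 ≤ |x| then 0 else -(1 - |x|) ^ 2 / 2
    let u2 : ℝ → ℝ := fun _ => 0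
    ∀ x : ℝ, x ≠ 0 →
      DifferentiableAt ℝ u1 x ∧
      u1 x = -(deriv u1 x / 2 + deriv u2 x) * deriv u1 x ∧
      u2 x = -(deriv u2 x / 2 + deriv u1 x) * deriv u2 x := by
  intro u1 u2 x hx
  have hu1 : u1 = fun y => -max (1 - |y|) 0 ^ 2 / 2 := funext (ite_le_abs_eq_neg_max_sq 1)
  have hu1' : HasDerivAt u1 (SignType.sign x * max (1 - |x|) 0) x :=
    hu1 ▸ hasDerivAt_neg_max_sub_abs_sq 1 hx
  have hu2' : deriv u2 x = 0 := deriv_const x 0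
  refine ⟨hu1'.differentiableAt, ?_, by simp [u2, hu2']⟩
  rw [hu1'.deriv, hu2', hu1]
  linear_combination (max (1 - |x|) 0 ^ 2 / 2) * sign_sq_of_ne_zero hx
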